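/- arXiv:1709.10040 — 2 statements merged into one kernel-verified Lean document; each statement's English description precedes it below -/
import Mathlib

section
/- Assume the positive real parameters satisfy b2inf > 2·(χ2/d3)·l and a2inf·(b0inf·(b2inf − l·χ2/d3) − b0sup·(χ2/d3)·l) ≥ a0sup·((b2inf − l·χ2/d3)·(b2sup − l·χ2/d3) − (l·χ2/d3)²), together with b0sup ≥ b0inf and b2sup ≥ b2inf. Then a0sup/b0inf ≤ a2inf/b2sup. -/
theorem stmt5 (a0sup a2inf b0inf b0sup b2inf b2sup χ2 d3 l : ℝ)
    (ha0 : 0 < a0sup) (ha2 : 0 < a2inf) (hb0i : 0 < b0inf) (hb0s : 0 < b0sup)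
    (hb2i : 0 < b2inf) (hb2s : 0 < b2sup) (hχ2 : 0 < χ2) (hd3 : 0 < d3) (hl : 0 < l)
    (hb0 : b0sup ≥ b0inf) (hb2 : b2sup ≥ b2inf)
    (hb2pos : b2sup - l * χ2 / d3 > 0)
    (h1 : b2inf > 2 * (χ2 / d3) * l)
    (h2 : a2inf * (b0inf * (b2inf - l * χ2 / d3) - b0sup * (χ2 / d3) * l) ≥
          a0sup * ((b2inf - l * χ2 / d3) * (b2sup - l * χ2 / d3) - (l * χ2 / d3) ^ 2)) :
    a0sup / b0inf ≤ a2inf / b2sup := by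
  set c : ℝ := l * χ2 / d3 with hc
  have hcpos : 0 < c := by positivity
  have h1' : b2inf - 2 * c > 0 := by
    have h : 2 * (χ2 / d3) * l = 2 * c := by rw [hc]; ring
    linarith [h ▸ h1]
  have h2' : a2inf * (b0inf * (b2inf - c) - b0sup * c) ≥
      a0sup * ((b2inf - c) * (b2sup - c) - c ^ 2) := by
    have h : b0sup * (χ2 / d3) * l = b0sup * c := by rw [hc]; ring
    linarith [h ▸ h2]
  have h3 : a2inf * b0inf * (b2inf - 2 * c) ≥
      a0sup * ((b2inf - c) * (b2sup - c) - c ^ 2) := by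
    nlinarith [mul_le_mul_of_nonneg_left hb0 (mul_pos ha2 hcpos).le]
  have h4 : (b2inf - c) * (b2sup - c) - c ^ 2 ≥ b2sup * (b2inf - 2 * c) := by
    nlinarith
  have h5 : a2inf * b0inf * (b2inf - 2 * c) ≥ a0sup * b2sup * (b2inf - 2 * c) := by
    nlinarith [mul_le_mul_of_nonneg_right h4 ha0.le]
  have h6 : a2inf * b0inf ≥ a0sup * b2sup := le_of_mul_le_mul_right (by linarith) h1'
  rw [div_le_div_iff₀ hb0i hb2s]
  linarith
end

section
/- Consider the Lotka-Volterra ODE system u' = u(a0(t) − a1(t)u − a2(t)v), v' = v(b0(t) − b1(t)u − b2(t)v), where ai, bi : ℝ → ℝ are continuous with positive infima and finite suprema, and assume a0inf·b2inf > a2sup·b0sup and b0inf·a1inf > b1sup·a0sup, where fsup = sup f, finf = inf f. Define s1 = (b2inf·a0inf − a2sup·b0sup)/(b2inf·a1sup − a2sup·b1inf) and r1 = (b2sup·a0sup − a2inf·b0inf)/(b2sup·a1inf − a2inf·b1sup), and assume the denominators are positive. Then 0 < s1 ≤ r1. -/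
set_option maxHeartbeats 1000000 in
theorem stmt10 (a0inf a0sup a1inf a1sup a2inf a2sup b0inf b0sup b1inf b1sup b2inf b2sup : ℝ)
    (ha0 : 0 < a0inf) (ha1 : 0 < a1inf) (ha2 : 0 < a2inf)
    (hb0 : 0 < b0inf) (hb1 : 0 < b1inf) (hb2 : 0 < b2inf)
    (ha0' : a0inf ≤ a0sup) (ha1' : a1inf ≤ a1sup) (ha2' : a2inf ≤ a2sup)
    (hb0' : b0inf ≤ b0sup) (hb1' : b1inf ≤ b1sup) (hb2' : b2inf ≤ b2sup)
    (hc1 : a0inf * b2inf > a2sup * b0sup)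
    (hc2 : b0inf * a1inf > b1sup * a0sup)
    (s1 r1 : ℝ)
    (hs1 : s1 = (b2inf * a0inf - a2sup * b0sup) / (b2inf * a1sup - a2sup * b1inf))
    (hr1 : r1 = (b2sup * a0sup - a2inf * b0inf) / (b2sup * a1inf - a2inf * b1sup))
    (hden1 : 0 < b2inf * a1sup - a2sup * b1inf)
    (hden2 : 0 < b2sup * a1inf - a2inf * b1sup) :
    0 < s1 ∧ s1 ≤ r1 := by
  have hN1 : 0 < b2inf * a0inf - a2sup * b0sup := by nlinarith
  have hs1' : s1 * (b2inf * a1sup - a2sup * b1inf) = b2inf * a0inf - a2sup * b0sup := by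
    rw [hs1]; field_simp
  have hs1pos : 0 < s1 := by rw [hs1]; exact div_pos hN1 hden1
  refine ⟨hs1pos, ?_⟩
  have ha2s : 0 < a2sup := lt_of_lt_of_le ha2 ha2'
  have hb2s : 0 < b2sup := lt_of_lt_of_le hb2 hb2'
  have hkey : a0inf * b1inf ≤ a1sup * b0sup := by nlinarith
  have hA : a1sup * s1 ≤ a0inf := by nlinarith [mul_le_mul_of_nonneg_left hkey (le_of_lt ha2s)]
  have hB : 0 ≤ b0sup - b1inf * s1 := by nlinarith
  have hg : 0 ≤ b2sup * (a0sup - a1inf * s1) - a2inf * (b0inf - b1sup * s1) := by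
    rcases le_or_gt (b0inf - b1sup * s1) 0 with h | h
    · nlinarith [mul_nonneg (le_of_lt hb2s) (sub_nonneg.2 hA)]
    · have h1 : a2inf * (b0inf - b1sup * s1) ≤ a2sup * (b0inf - b1sup * s1) :=
        mul_le_mul_of_nonneg_right ha2' h.le
      have h2 : a2sup * (b0inf - b1sup * s1) ≤ a2sup * (b0sup - b1inf * s1) := by
        nlinarith [mul_le_mul_of_nonneg_right hb1' hs1pos.le]
      have h3 : a2sup * (b0sup - b1inf * s1) = b2inf * (a0inf - a1sup * s1) := by
        linear_combination hs1'
      have h4 : b2inf * (a0inf - a1sup * s1) ≤ b2sup * (a0inf - a1sup * s1) :=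
        mul_le_mul_of_nonneg_right hb2' (sub_nonneg.2 hA)
      have h5 : b2sup * (a0inf - a1sup * s1) ≤ b2sup * (a0sup - a1inf * s1) := by
        nlinarith [mul_le_mul_of_nonneg_right ha1' hs1pos.le]
      linarith
  have hr1' : r1 * (b2sup * a1inf - a2inf * b1sup) = b2sup * a0sup - a2inf * b0inf := by
    rw [hr1]; field_simp
  have h6 : s1 * (b2sup * a1inf - a2inf * b1sup) ≤ b2sup * a0sup - a2inf * b0inf := by
    nlinarith [hg]
  have h7 : s1 * (b2sup * a1inf - a2inf * b1sup) ≤ r1 * (b2sup * a1inf - a2inf * b1sup) := by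
    linarith
  exact le_of_mul_le_mul_right h7 hden2
end
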